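/- Let α > -1 and n ≥ 1. If x_k and x_{k+1} are consecutive zeros of L_n^α, then there is exactly one zero of L_{n-1}^{α+2} in the open interval (x_k, x_{k+1}); equivalently, writing 0 < x_1 < ... < x_n for the zeros of L_n^α and 0 < X_1 < ... < X_{n-1} for the zeros of L_{n-1}^{α+2}, we have x_k < X_k < x_{k+1} for each k = 1, ..., n-1. -/

import Mathlib

open Finset

/-- Generalized Laguerre polynomial `L_n^α(x) = ∑_{k=0}^n (-1)^k C(n+α, n-k) x^k / k!`,
where `C(n+α, n-k) = (∏_{i=1}^{n-k} (α+k+i)) / (n-k)!`. -/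
noncomputable def laguerre (α : ℝ) (n : ℕ) (x : ℝ) : ℝ :=
  ∑ k ∈ Finset.range (n + 1),
    (-1 : ℝ) ^ k * (∏ i ∈ Finset.range (n - k), (α + k + 1 + i)) /
      ((Nat.factorial (n - k) : ℝ) * (Nat.factorial k : ℝ)) * x ^ k

/-!
Everything rests on Rolle's theorem with an integrating factor and on three relations read off the
coefficients: `L_{n+1}^{α+1} = L_{n+1}^α + L_n^{α+1}`,
`(α+1) L_{n+1}^{α+1} = (α+n+2) L_{n+1}^α + x L_n^{α+2}` and `(L_{n+1}^α)' = -L_n^{α+1}`.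

Between two zeros of `L_{n+1}^α`, Rolle applied to `e^{cx} L_{n+1}^α` with `c = (n+1)/(α+1)` gives a
point where `x L_n^{α+2}` vanishes. Between two zeros of `L_n^{α+2}`, Rolle applied to
`x^{α+2} e^{cx} L_n^{α+2}` with `c = -(α+n+2)/(α+1)` gives a zero of `L_{n+1}^α`, so two zeros of
`L_n^{α+2}` cannot lie between consecutive zeros of `L_{n+1}^α`. All zeros are positive because every
term of `L_n^α(x)` is nonnegative for `x ≤ 0`.
-/

open scoped Nat

section Pochhammer

variable {S : Type*} [CommSemiring S]

theorem ascPochhammer_eval_eq_prod (m : ℕ) (β : S) :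
    (ascPochhammer S m).eval β = ∏ i ∈ range m, (β + i) := by
  induction m with
  | zero => simp
  | succ m ih => rw [ascPochhammer_succ_eval, ih, prod_range_succ]

theorem ascPochhammer_succ_eval_left (m : ℕ) (β : S) :
    (ascPochhammer S (m + 1)).eval β = β * (ascPochhammer S m).eval (β + 1) := by
  simp [ascPochhammer_succ_left]

theorem ascPochhammer_eval_add_one_succ (m : ℕ) (β : S) :
    (ascPochhammer S (m + 1)).eval (β + 1) =
      (ascPochhammer S (m + 1)).eval β + (m + 1) * (ascPochhammer S m).eval (β + 1) := by
  rw [ascPochhammer_succ_eval, ascPochhammer_succ_eval_left]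
  ring

theorem mul_ascPochhammer_eval_add_one (m : ℕ) (β : S) :
    β * (ascPochhammer S m).eval (β + 1) = (β + m) * (ascPochhammer S m).eval β := by
  rw [← ascPochhammer_succ_eval_left, ascPochhammer_succ_eval, mul_comm]

end Pochhammer

-- Meant for `k ≤ n`: for `k > n` the truncated `n - k` makes it `(-1)^k / k!`, not `0`.
noncomputable def laguerreCoeff (α : ℝ) (n k : ℕ) : ℝ :=
  (-1) ^ k * (ascPochhammer ℝ (n - k)).eval (α + k + 1) / ((n - k)! * k !)

theorem laguerre_eq_sum (α : ℝ) (n : ℕ) (x : ℝ) :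
    laguerre α n x = ∑ k ∈ range (n + 1), laguerreCoeff α n k * x ^ k := by
  simp only [laguerre, laguerreCoeff, ascPochhammer_eval_eq_prod]

theorem laguerreCoeff_self (α : ℝ) (n : ℕ) : laguerreCoeff α n n = (-1) ^ n / n ! := by
  simp [laguerreCoeff]

theorem laguerreCoeff_add_one_succ {α : ℝ} {n k : ℕ} (hk : k ≤ n) :
    laguerreCoeff (α + 1) (n + 1) k = laguerreCoeff α (n + 1) k + laguerreCoeff (α + 1) n k := by
  obtain ⟨j, rfl⟩ := Nat.exists_eq_add_of_le hk
  simp only [laguerreCoeff, show k + j + 1 - k = j + 1 by omega, Nat.add_sub_cancel_left,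
    show α + 1 + k + 1 = α + k + 1 + 1 by ring, ascPochhammer_eval_add_one_succ, Nat.factorial_succ]
  push_cast
  field_simp

theorem mul_laguerreCoeff_add_one_succ_succ {α : ℝ} {n k : ℕ} (hk : k ≤ n) :
    (α + 1) * laguerreCoeff (α + 1) (n + 1) (k + 1) =
      (α + n + 2) * laguerreCoeff α (n + 1) (k + 1) + laguerreCoeff (α + 2) n k := by
  obtain ⟨j, rfl⟩ := Nat.exists_eq_add_of_le hk
  have key := mul_ascPochhammer_eval_add_one j (α + k + 2)
  simp only [laguerreCoeff, show k + j + 1 - (k + 1) = j by omega, Nat.add_sub_cancel_left,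
    Nat.factorial_succ, pow_succ]
  push_cast
  rw [show α + 1 + (k + 1) + 1 = α + k + 2 + 1 by ring, show α + (k + 1) + 1 = α + k + 2 by ring,
    show α + 2 + k + 1 = α + k + 2 + 1 by ring]
  field_simp
  linear_combination -key

theorem mul_laguerreCoeff_add_one_succ_zero (α : ℝ) (n : ℕ) :
    (α + 1) * laguerreCoeff (α + 1) (n + 1) 0 = (α + n + 2) * laguerreCoeff α (n + 1) 0 := by
  have key := mul_ascPochhammer_eval_add_one (n + 1) (α + 1)
  simp only [laguerreCoeff, Nat.sub_zero]
  push_cast at key ⊢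
  rw [show α + 1 + 0 + 1 = α + 1 + 1 by ring, show α + 0 + 1 = α + 1 by ring]
  field_simp
  linear_combination key

theorem laguerreCoeff_succ_succ_mul (α : ℝ) (n k : ℕ) :
    laguerreCoeff α (n + 1) (k + 1) * (k + 1) = -laguerreCoeff (α + 1) n k := by
  simp only [laguerreCoeff, Nat.add_sub_add_right, Nat.factorial_succ]
  push_cast
  rw [show α + (k + 1) + 1 = α + 1 + k + 1 by ring]
  field_simp
  ring

theorem laguerre_add_one_succ (α : ℝ) (n : ℕ) (x : ℝ) :
    laguerre (α + 1) (n + 1) x = laguerre α (n + 1) x + laguerre (α + 1) n x := by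
  simp only [laguerre_eq_sum, sum_range_succ _ (n + 1), laguerreCoeff_self, add_right_comm _ _
    (∑ k ∈ range (n + 1), laguerreCoeff (α + 1) n k * x ^ k), ← sum_add_distrib, ← add_mul]
  congr 1
  exact sum_congr rfl fun k hk => by rw [laguerreCoeff_add_one_succ (mem_range_succ_iff.mp hk)]

theorem mul_laguerre_add_one_succ (α : ℝ) (n : ℕ) (x : ℝ) :
    (α + 1) * laguerre (α + 1) (n + 1) x =
      (α + n + 2) * laguerre α (n + 1) x + x * laguerre (α + 2) n x := by
  simp only [laguerre_eq_sum, sum_range_succ' _ (n + 1), mul_add, mul_sum, pow_zero, mul_one,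
    mul_laguerreCoeff_add_one_succ_zero]
  rw [add_right_comm (∑ _ ∈ _, _), ← sum_add_distrib]
  congr 1
  refine sum_congr rfl fun k hk => ?_
  rw [← mul_assoc, mul_laguerreCoeff_add_one_succ_succ (mem_range_succ_iff.mp hk)]
  ring

theorem hasDerivAt_laguerre_succ (α : ℝ) (n : ℕ) (x : ℝ) :
    HasDerivAt (laguerre α (n + 1)) (-laguerre (α + 1) n x) x := by
  rw [show laguerre α (n + 1) = _ from funext (laguerre_eq_sum α (n + 1))]
  refine (HasDerivAt.fun_sum fun k _ =>
    (hasDerivAt_pow k x).const_mul (laguerreCoeff α (n + 1) k)).congr_deriv ?_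
  simp only [laguerre_eq_sum, sum_range_succ' _ (n + 1), ← sum_neg_distrib, CharP.cast_eq_zero,
    zero_mul, mul_zero, add_zero, Nat.add_sub_cancel]
  refine sum_congr rfl fun k _ => ?_
  rw [neg_mul_eq_neg_mul, ← laguerreCoeff_succ_succ_mul]
  push_cast
  ring

theorem laguerre_pos_of_nonpos {α : ℝ} (hα : -1 < α) (n : ℕ) {x : ℝ} (hx : x ≤ 0) :
    0 < laguerre α n x := by
  have hterm (k : ℕ) : laguerreCoeff α n k * x ^ k =
      (ascPochhammer ℝ (n - k)).eval (α + k + 1) / ((n - k)! * k !) * (-x) ^ k := by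
    rw [laguerreCoeff, neg_pow]
    ring
  have hcoeff (k : ℕ) : 0 < (ascPochhammer ℝ (n - k)).eval (α + k + 1) / ((n - k)! * k !) :=
    div_pos (ascPochhammer_pos _ _ (by linarith [k.cast_nonneg (α := ℝ)])) (by positivity)
  rw [laguerre_eq_sum]
  refine sum_pos' (fun k _ => ?_) ⟨0, by simp, ?_⟩
  · rw [hterm]
    exact mul_nonneg (hcoeff k).le (pow_nonneg (by linarith) k)
  · rw [hterm]
    simpa using hcoeff 0

theorem exists_hasDerivAt_add_mul_eq_zero {f f' H h : ℝ → ℝ} {a b : ℝ} (hab : a < b)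
    (hfa : f a = 0) (hfb : f b = 0) (hf : ∀ x ∈ Set.Icc a b, HasDerivAt f (f' x) x)
    (hH : ∀ x ∈ Set.Icc a b, HasDerivAt H (h x) x) :
    ∃ ξ ∈ Set.Ioo a b, f' ξ + h ξ * f ξ = 0 := by
  have hg (x) (hx : x ∈ Set.Icc a b) : HasDerivAt (fun y => Real.exp (H y) * f y)
      (Real.exp (H x) * (f' x + h x * f x)) x :=
    ((hH x hx).exp.mul (hf x hx)).congr_deriv (by ring)
  obtain ⟨ξ, hξ, hg0⟩ := exists_hasDerivAt_eq_zero hab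
    (fun x hx => (hg x hx).continuousAt.continuousWithinAt) (by simp [hfa, hfb])
    (fun x hx => hg x (Set.Ioo_subset_Icc_self hx))
  exact ⟨ξ, hξ, (mul_eq_zero.mp hg0).resolve_left (Real.exp_ne_zero _)⟩

theorem exists_laguerre_add_two_eq_zero_mem_Ioo {α : ℝ} (hα : α ≠ -1) {n : ℕ} {a b : ℝ}
    (ha : 0 ≤ a) (hab : a < b) (hfa : laguerre α (n + 1) a = 0) (hfb : laguerre α (n + 1) b = 0) :
    ∃ ξ ∈ Set.Ioo a b, laguerre (α + 2) n ξ = 0 := by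
  set c := (n + 1) / (α + 1)
  have hcα : c * (α + 1) = n + 1 := div_mul_cancel₀ _ fun h => hα (by linarith)
  obtain ⟨ξ, hξ, hξ0⟩ := exists_hasDerivAt_add_mul_eq_zero hab hfa hfb
    (fun x _ => hasDerivAt_laguerre_succ α n x) (H := fun x => c * x) (h := fun _ => c)
    (fun x _ => by simpa using (hasDerivAt_id x).const_mul c)
  refine ⟨ξ, hξ, (mul_eq_zero.mp ?_).resolve_left (ha.trans_lt hξ.1).ne'⟩
  -- the two relations give `x L_n^{α+2} = (α+1) L_n^{α+1} - (n+1) L_{n+1}^α`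
  linear_combination -mul_laguerre_add_one_succ α n ξ + (α + 1) * laguerre_add_one_succ α n ξ
    - (α + 1) * hξ0 + laguerre α (n + 1) ξ * hcα

theorem exists_laguerre_eq_zero_mem_Ioo {α : ℝ} (hα : -1 < α) {n : ℕ} {a b : ℝ}
    (ha : 0 < a) (hab : a < b) (hqa : laguerre (α + 2) n a = 0)
    (hqb : laguerre (α + 2) n b = 0) : ∃ ξ ∈ Set.Ioo a b, laguerre α (n + 1) ξ = 0 := by
  rcases n with _ | n
  · simp [laguerre] at hqa
  set c := -(α + n + 3) / (α + 1)
  have hcα : c * (α + 1) = -(α + n + 3) := div_mul_cancel₀ _ (by linarith)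
  have hderiv (x) : HasDerivAt (laguerre (α + 2) (n + 1)) (-laguerre (α + 3) n x) x := by
    have h := hasDerivAt_laguerre_succ (α + 2) n x
    rwa [show α + 2 + 1 = α + 3 by ring] at h
  obtain ⟨ξ, hξ, hξ0⟩ := exists_hasDerivAt_add_mul_eq_zero hab hqa hqb (fun x _ => hderiv x)
    (H := fun x => c * x + (α + 2) * Real.log x) (h := fun x => c + (α + 2) * x⁻¹)
    (fun x hx => by
      simpa using ((hasDerivAt_id x).const_mul c).fun_add
        ((Real.hasDerivAt_log (ha.trans_le hx.1).ne').const_mul (α + 2)))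
  refine ⟨ξ, hξ, ?_⟩
  have hinv : ξ * ξ⁻¹ = 1 := mul_inv_cancel₀ (ha.trans hξ.1).ne'
  have h1 := mul_laguerre_add_one_succ (α + 1) n ξ
  have h2 := mul_laguerre_add_one_succ α (n + 1) ξ
  have h3 := laguerre_add_one_succ α (n + 1) ξ
  rw [show α + 1 + 1 = α + 2 by ring, show α + 1 + 2 = α + 3 by ring] at h1
  push_cast at h2
  -- with `L = L_{n+1}^{α+2}`, `h1`–`h3` give
  -- `(α+1)(α+2) L - (α+n+3) x L + (α+1) x L' = (n+2)(α+n+3) L_{n+2}^α`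
  have key : ((n : ℝ) + 2) * (α + n + 3) * laguerre α (n + 1 + 1) ξ = 0 := by
    linear_combination (α + 1) * ξ * hξ0 - (α + 1) * (α + 2) * laguerre (α + 2) (n + 1) ξ * hinv
      - ξ * laguerre (α + 2) (n + 1) ξ * hcα - (α + 1) * h1 - (α + n + 3) * h2
      + (α + n + 3) * (α + 1) * h3
  exact (mul_eq_zero.mp key).resolve_left
    (mul_pos (by positivity) (by linarith [n.cast_nonneg (α := ℝ)])).ne'

theorem zero_of_shifted_between_consecutive_zeros (α : ℝ) (hα : α > -1) (n : ℕ)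
    (hn : 1 ≤ n) (x x' : ℝ) (hlt : x < x') (hx : laguerre α n x = 0)
    (hx' : laguerre α n x' = 0) (hcons : ∀ u ∈ Set.Ioo x x', laguerre α n u ≠ 0) :
    ∃! X, X ∈ Set.Ioo x x' ∧ laguerre (α + 2) (n - 1) X = 0 := by
  obtain ⟨n, rfl⟩ := Nat.exists_eq_add_of_le' hn
  rw [Nat.add_sub_cancel]
  have hx0 : 0 < x := lt_of_not_ge fun h => (laguerre_pos_of_nonpos hα _ h).ne' hx
  obtain ⟨ξ, hξ, hξ0⟩ := exists_laguerre_add_two_eq_zero_mem_Ioo hα.ne' hx0.le hlt hx hx'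
  have hsep : ∀ y ∈ Set.Ioo x x', ∀ y' ∈ Set.Ioo x x', y < y' →
      laguerre (α + 2) n y = 0 → laguerre (α + 2) n y' ≠ 0 := by
    intro y hy y' hy' hyy' h h'
    obtain ⟨ζ, hζ, hζ0⟩ := exists_laguerre_eq_zero_mem_Ioo hα (hx0.trans hy.1) hyy' h h'
    exact hcons ζ ⟨hy.1.trans hζ.1, hζ.2.trans hy'.2⟩ hζ0
  refine ⟨ξ, ⟨hξ, hξ0⟩, fun y ⟨hy, hy0⟩ => ?_⟩
  rcases lt_trichotomy y ξ with h | h | h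
  · exact (hsep y hy ξ hξ h hy0 hξ0).elim
  · exact h
  · exact (hsep ξ hξ y hy h hξ0 hy0).elim
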